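/- arXiv:2310.05992 — 3 statements merged into one kernel-verified Lean document; each statement's English description precedes it below -/
import Mathlib

section
/- Let V ∈ GL⁺(H) be a positive invertible operator on a Hilbert space H and F : Ω → H a V-controlled integral frame with bounds A, B such that the controlled frame operator satisfies S_{VF} = V S_F where S_F is defined weakly by ⟨S_F f, f⟩ = ∫_Ω |⟨f,F(ς)⟩|² dμ(ς). Then F is a continuous frame with bounds A‖V^{1/2}‖^{-2} and B‖V^{-1/2}‖². -/
open MeasureTheory RCLike

local notation "⟪" x ", " y "⟫" => @inner ℂ _ _ x y

/-!
By its weak definition the frame operator `S` is positive, so it has an orthonormal eigenbasis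
with eigenvalues `λ ≥ 0`, and `⟪S f, f⟫ = ∑ λᵢ ‖⟪f, bᵢ⟫‖²` lies between the smallest and the
largest eigenvalue times `‖f‖²`. At a unit eigenvector `b`, `⟪V S b, b⟫ = λ ‖V^{1/2} b‖²` with
`‖V^{-1/2}‖⁻¹ ≤ ‖V^{1/2} b‖ ≤ ‖V^{1/2}‖`, so the controlled frame bounds confine every eigenvalue
to `[A ‖V^{1/2}‖⁻², B ‖V^{-1/2}‖²]`.
-/

section InnerProduct

variable {𝕜 E : Type*} [RCLike 𝕜] [NormedAddCommGroup E] [InnerProductSpace 𝕜 E]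

theorem inner_mul_inner_swap_eq_norm_sq (x y : E) :
    inner 𝕜 x y * inner 𝕜 y x = (‖inner 𝕜 x y‖ ^ 2 : ℝ) := by
  rw [← inner_conj_symm y x, RCLike.mul_conj, ofReal_pow]

namespace LinearMap.IsSymmetric

variable [FiniteDimensional 𝕜 E] {T : E →ₗ[𝕜] E} (hT : T.IsSymmetric) {n : ℕ}
  (hn : Module.finrank 𝕜 E = n)

theorem re_inner_map_self_eq_sum_eigenvalues (x : E) :
    re (inner 𝕜 (T x) x) =
      ∑ i, hT.eigenvalues hn i * ‖inner 𝕜 x (hT.eigenvectorBasis hn i)‖ ^ 2 := by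
  rw [← (hT.eigenvectorBasis hn).sum_inner_mul_inner, map_sum]
  refine Finset.sum_congr rfl fun i _ => ?_
  rw [hT, hT.apply_eigenvectorBasis, inner_smul_right, mul_assoc,
    inner_mul_inner_swap_eq_norm_sq, ← ofReal_mul, ofReal_re]

theorem mul_norm_sq_le_re_inner_map_self {a : ℝ} (ha : ∀ i, a ≤ hT.eigenvalues hn i) (x : E) :
    a * ‖x‖ ^ 2 ≤ re (inner 𝕜 (T x) x) := by
  rw [hT.re_inner_map_self_eq_sum_eigenvalues hn,
    ← (hT.eigenvectorBasis hn).sum_sq_norm_inner_left, Finset.mul_sum]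
  gcongr with i
  exact ha i

theorem re_inner_map_self_le_mul_norm_sq {b : ℝ} (hb : ∀ i, hT.eigenvalues hn i ≤ b) (x : E) :
    re (inner 𝕜 (T x) x) ≤ b * ‖x‖ ^ 2 := by
  rw [hT.re_inner_map_self_eq_sum_eigenvalues hn,
    ← (hT.eigenvectorBasis hn).sum_sq_norm_inner_left, Finset.mul_sum]
  gcongr with i
  exact hb i

end LinearMap.IsSymmetric

end InnerProduct

section FrameOperator

variable {𝕜 E Ω : Type*} [RCLike 𝕜] [NormedAddCommGroup E] [InnerProductSpace 𝕜 E]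
  [MeasurableSpace Ω] {μ : Measure Ω} {F : Ω → E} {S : E →ₗ[𝕜] E}

theorem inner_map_self_eq_integral_norm_sq {f : E}
    (hS : inner 𝕜 (S f) f = ∫ ς, inner 𝕜 f (F ς) * inner 𝕜 (F ς) f ∂μ) :
    inner 𝕜 (S f) f = (∫ ς, ‖inner 𝕜 f (F ς)‖ ^ 2 ∂μ : ℝ) := by
  simp_rw [hS, inner_mul_inner_swap_eq_norm_sq, integral_ofReal]

theorem isPositive_of_inner_eq_integral
    (hS : ∀ f g, inner 𝕜 (S f) g = ∫ ς, inner 𝕜 f (F ς) * inner 𝕜 (F ς) g ∂μ) :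
    S.IsPositive := by
  refine ⟨fun f g => ?_, fun f => ?_⟩
  · rw [← inner_conj_symm f, hS, hS, ← integral_conj]
    simp_rw [map_mul, inner_conj_symm, mul_comm]
  · rw [inner_map_self_eq_integral_norm_sq (hS f f), ofReal_re]
    exact integral_nonneg fun ς => sq_nonneg _

end FrameOperator

section ControlledFrame

variable {𝕜 E : Type*} [RCLike 𝕜] [NormedAddCommGroup E] [InnerProductSpace 𝕜 E]
  [CompleteSpace E] {T : E →ₗ[𝕜] E} {W : E →L[𝕜] E} {v : E} {c : ℝ}

theorem re_inner_sq_apply_eigenvector (hW : IsSelfAdjoint W) (hv : T v = (c : 𝕜) • v) :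
    re (inner 𝕜 (W (W (T v))) v) = c * ‖W v‖ ^ 2 := by
  rw [hv, map_smul, map_smul, inner_smul_left, conj_ofReal, re_ofReal_mul,
    ContinuousLinearMap.apply_norm_sq_eq_inner_adjoint_left, hW.adjoint_eq]
  rfl

theorem mul_inv_norm_sq_le_eigenvalue {A : ℝ} (hW : IsSelfAdjoint W) (hv : ‖v‖ = 1)
    (hTv : T v = (c : 𝕜) • v) (hc : 0 ≤ c) (hA : A ≤ re (inner 𝕜 (W (W (T v))) v)) :
    A * ‖W‖⁻¹ ^ 2 ≤ c := by
  have hWv : ‖W v‖ ≤ ‖W‖ := W.unit_le_opNorm v hv.le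
  rw [re_inner_sq_apply_eigenvector hW hTv] at hA
  calc A * ‖W‖⁻¹ ^ 2 ≤ c * ‖W‖ ^ 2 * ‖W‖⁻¹ ^ 2 := by
        gcongr
        exact hA.trans (by gcongr)
    _ = c * (‖W‖ * ‖W‖⁻¹) ^ 2 := by ring
    _ ≤ c := mul_le_of_le_one_right hc (pow_le_one₀ (by positivity) mul_inv_le_one)

theorem eigenvalue_le_mul_norm_sq {B : ℝ} {Winv : E →L[𝕜] E} (hW : IsSelfAdjoint W)
    (hWinv : Winv ∘L W = 1) (hv : ‖v‖ = 1) (hTv : T v = (c : 𝕜) • v) (hc : 0 ≤ c)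
    (hB : re (inner 𝕜 (W (W (T v))) v) ≤ B) :
    c ≤ B * ‖Winv‖ ^ 2 := by
  have hWv : 1 ≤ ‖Winv‖ * ‖W v‖ := by
    simpa [hv, ← ContinuousLinearMap.comp_apply, hWinv] using Winv.le_opNorm (W v)
  rw [re_inner_sq_apply_eigenvector hW hTv] at hB
  calc c ≤ c * (‖Winv‖ * ‖W v‖) ^ 2 := le_mul_of_one_le_right hc (one_le_pow₀ hWv)
    _ = c * ‖W v‖ ^ 2 * ‖Winv‖ ^ 2 := by ring
    _ ≤ B * ‖Winv‖ ^ 2 := by gcongr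

end ControlledFrame

theorem continuous_frame_of_controlled_frame_general
    {H Ω : Type*} [NormedAddCommGroup H] [InnerProductSpace ℂ H]
    [FiniteDimensional ℂ H] [MeasurableSpace Ω] (μ : Measure Ω)
    (F : Ω → H) (V S W Winv : H →L[ℂ] H) (A B : ℝ)
    -- W is the positive square root V^{1/2} of V, Winv = V^{-1/2} its inverse
    (hWsa : IsSelfAdjoint W)
    (hWsq : W ∘L W = V) (hWinv : W ∘L Winv = 1 ∧ Winv ∘L W = 1)
    -- S is the frame operator of F, defined weakly
    (hweak : ∀ f g : H, ⟪S f, g⟫ = ∫ ς, ⟪f, F ς⟫ * ⟪F ς, g⟫ ∂μ)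
    -- F is a V-controlled integral frame with bounds A, B and S_{VF} = V ∘L S
    (hctrl : ∀ f : H, (⟪(V ∘L S) f, f⟫ = ∫ ς, ⟪f, F ς⟫ * ⟪V (F ς), f⟫ ∂μ) ∧
      A * ‖f‖ ^ 2 ≤ (⟪(V ∘L S) f, f⟫).re ∧ (⟪(V ∘L S) f, f⟫).re ≤ B * ‖f‖ ^ 2) :
    ∀ f : H,
      A * ‖W‖⁻¹ ^ 2 * ‖f‖ ^ 2 ≤ ∫ ς, ‖⟪f, F ς⟫‖ ^ 2 ∂μ ∧
      ∫ ς, ‖⟪f, F ς⟫‖ ^ 2 ∂μ ≤ B * ‖Winv‖ ^ 2 * ‖f‖ ^ 2 := by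
  have hS : (S : H →ₗ[ℂ] H).IsPositive := isPositive_of_inner_eq_integral hweak
  obtain ⟨n, hn⟩ : ∃ n, Module.finrank ℂ H = n := ⟨_, rfl⟩
  set b := hS.isSymmetric.eigenvectorBasis hn
  have hb : ∀ i, S (b i) = (hS.isSymmetric.eigenvalues hn i : ℂ) • b i :=
    hS.isSymmetric.apply_eigenvectorBasis hn
  subst hWsq
  intro f
  have hSf : (∫ ς, ‖⟪f, F ς⟫‖ ^ 2 ∂μ) = re ⟪(S : H →ₗ[ℂ] H) f, f⟫ := by
    rw [inner_map_self_eq_integral_norm_sq (hweak f f), ofReal_re]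
  rw [hSf]
  refine ⟨hS.isSymmetric.mul_norm_sq_le_re_inner_map_self hn (fun i => ?_) f,
    hS.isSymmetric.re_inner_map_self_le_mul_norm_sq hn (fun i => ?_) f⟩
  · refine mul_inv_norm_sq_le_eigenvalue hWsa (b.norm_eq_one i) (hb i)
      (hS.nonneg_eigenvalues hn i) ?_
    have h := (hctrl (b i)).2.1
    rwa [b.norm_eq_one, one_pow, mul_one] at h
  · refine eigenvalue_le_mul_norm_sq hWsa hWinv.2 (b.norm_eq_one i) (hb i)
      (hS.nonneg_eigenvalues hn i) ?_
    have h := (hctrl (b i)).2.2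
    rwa [b.norm_eq_one, one_pow, mul_one] at h

theorem continuous_frame_of_controlled_frame
    {H Ω : Type*} [NormedAddCommGroup H] [InnerProductSpace ℂ H]
    [FiniteDimensional ℂ H] [MeasurableSpace Ω] (μ : Measure Ω)
    (F : Ω → H) (V S W Winv : H →L[ℂ] H) (A B : ℝ) (hA : 0 < A) (hAB : A ≤ B)
    -- V is positive, self-adjoint and invertible
    (hVsa : IsSelfAdjoint V) (hVpos : ∀ f : H, 0 ≤ (⟪V f, f⟫).re) (hVu : IsUnit V)
    -- W is the positive square root V^{1/2} of V, Winv = V^{-1/2} its inverse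
    (hWsa : IsSelfAdjoint W) (hWpos : ∀ f : H, 0 ≤ (⟪W f, f⟫).re)
    (hWsq : W ∘L W = V) (hWinv : W ∘L Winv = 1 ∧ Winv ∘L W = 1)
    -- S is the frame operator of F, defined weakly
    (hweak : ∀ f g : H, ⟪S f, g⟫ = ∫ ς, ⟪f, F ς⟫ * ⟪F ς, g⟫ ∂μ)
    -- F is a V-controlled integral frame with bounds A, B and S_{VF} = V ∘L S
    (hctrl : ∀ f : H, (⟪(V ∘L S) f, f⟫ = ∫ ς, ⟪f, F ς⟫ * ⟪V (F ς), f⟫ ∂μ) ∧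
      A * ‖f‖ ^ 2 ≤ (⟪(V ∘L S) f, f⟫).re ∧ (⟪(V ∘L S) f, f⟫).re ≤ B * ‖f‖ ^ 2) :
    ∀ f : H,
      A * ‖W‖⁻¹ ^ 2 * ‖f‖ ^ 2 ≤ ∫ ς, ‖⟪f, F ς⟫‖ ^ 2 ∂μ ∧
      ∫ ς, ‖⟪f, F ς⟫‖ ^ 2 ∂μ ≤ B * ‖Winv‖ ^ 2 * ‖f‖ ^ 2 :=
  continuous_frame_of_controlled_frame_general μ F V S W Winv A B hWsa hWsq hWinv hweak hctrl
end

section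
/- Let F : Ω → H be a V-controlled integral frame on a finite-dimensional Hilbert space H with controlled frame operator S_{VF}, where V is invertible and S_{VF} = V S_F. Then F is a continuous frame for H with frame operator S_F = V^{-1} S_{VF}, and every f ∈ H satisfies the reconstruction formula f = ∫_Ω ⟨f, (S_F^{-1})* F(ς)⟩ F(ς) dμ(ς) (weakly). -/
open MeasureTheory

local notation "⟪" x ", " y "⟫" => @inner ℂ _ _ x y

/-! Since `⟪S_F f, f⟫ = ∫ ‖⟪f, F ς⟫‖²`, the operator `S_F` is positive, and it is invertible because
`V` and `S_{VF} = V S_F` are. The spectrum of a positive invertible operator is a compact subset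
of `(0, ∞)`, so `S_F ≥ A` for some `A > 0`: this is the lower frame bound, while `‖S_F‖` is an
upper one. The reconstruction formula is the weak definition of `S_F` evaluated at `S_F⁻¹ f`. -/

namespace ContinuousLinearMap

variable {H : Type*} [NormedAddCommGroup H] [InnerProductSpace ℂ H]

lemma mul_norm_sq_le_re_inner_of_algebraMap_le {T : H →L[ℂ] H} {c : ℝ}
    (h : algebraMap ℝ (H →L[ℂ] H) c ≤ T) (x : H) : c * ‖x‖ ^ 2 ≤ (⟪T x, x⟫).re := by
  have hx := ((le_def _ _).1 h).re_inner_nonneg_left x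
  rwa [sub_apply, inner_sub_left, map_sub, sub_nonneg, Algebra.algebraMap_eq_smul_one, smul_apply,
    one_apply_eq_self, ← Complex.coe_smul, inner_smul_left, Complex.conj_ofReal,
    RCLike.re_to_complex, Complex.re_ofReal_mul, ← RCLike.re_to_complex, inner_self_eq_norm_sq] at hx

lemma re_inner_le_norm_mul_norm_sq (T : H →L[ℂ] H) (x : H) :
    (⟪T x, x⟫).re ≤ ‖T‖ * ‖x‖ ^ 2 :=
  calc (⟪T x, x⟫).re ≤ ‖T x‖ * ‖x‖ := re_inner_le_norm (𝕜 := ℂ) _ _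
    _ ≤ ‖T‖ * ‖x‖ * ‖x‖ := by gcongr; exact T.le_opNorm x
    _ = ‖T‖ * ‖x‖ ^ 2 := by ring

lemma IsPositive.exists_pos_mul_norm_sq_le [CompleteSpace H] {T : H →L[ℂ] H}
    (hT : T.IsPositive) (hTu : IsUnit T) : ∃ c > 0, ∀ x, c * ‖x‖ ^ 2 ≤ (⟪T x, x⟫).re := by
  obtain ⟨c, hc, hcT⟩ : ∃ c > 0, algebraMap ℝ (H →L[ℂ] H) c ≤ T := by
    cases subsingleton_or_nontrivial (H →L[ℂ] H) with
    | inl _ => exact ⟨1, one_pos, (Subsingleton.elim _ _).le⟩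
    | inr _ =>
      have hT' : IsStrictlyPositive T := hTu.isStrictlyPositive ((nonneg_iff_isPositive T).2 hT)
      exact (CFC.exists_pos_algebraMap_le_iff hT'.isSelfAdjoint).2 fun _ => hT'.spectrum_pos
  exact ⟨c, hc, mul_norm_sq_le_re_inner_of_algebraMap_le hcT⟩

end ContinuousLinearMap

section FrameOperator

variable {H Ω : Type*} [NormedAddCommGroup H] [InnerProductSpace ℂ H] [MeasurableSpace Ω]

def IsFrameOperator (μ : Measure Ω) (F : Ω → H) (S : H →L[ℂ] H) : Prop :=
  ∀ f g : H, ⟪S f, g⟫ = ∫ ς, ⟪f, F ς⟫ * ⟪F ς, g⟫ ∂μ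

namespace IsFrameOperator

variable {μ : Measure Ω} {F : Ω → H} {S : H →L[ℂ] H}

lemma inner_self_eq (hS : IsFrameOperator μ F S) (f : H) :
    ⟪S f, f⟫ = ((∫ ς, ‖⟪f, F ς⟫‖ ^ 2 ∂μ : ℝ) : ℂ) := by
  rw [hS, ← integral_complex_ofReal]
  congr 1 with ς
  rw [← inner_conj_symm (F ς) f, Complex.mul_conj', Complex.ofReal_pow]

lemma re_inner_self_eq (hS : IsFrameOperator μ F S) (f : H) :
    (⟪S f, f⟫).re = ∫ ς, ‖⟪f, F ς⟫‖ ^ 2 ∂μ := by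
  rw [hS.inner_self_eq, Complex.ofReal_re]

lemma isPositive (hS : IsFrameOperator μ F S) : S.IsPositive :=
  (ContinuousLinearMap.isPositive_iff_complex S).2 fun f => by
    rw [RCLike.re_to_complex, hS.re_inner_self_eq, hS.inner_self_eq]
    exact ⟨rfl, integral_nonneg fun _ => sq_nonneg _⟩

lemma exists_frame_bounds [CompleteSpace H] (hS : IsFrameOperator μ F S) (hSu : IsUnit S) :
    ∃ A B : ℝ, 0 < A ∧ A ≤ B ∧ ∀ f : H,
      A * ‖f‖ ^ 2 ≤ ∫ ς, ‖⟪f, F ς⟫‖ ^ 2 ∂μ ∧ ∫ ς, ‖⟪f, F ς⟫‖ ^ 2 ∂μ ≤ B * ‖f‖ ^ 2 := by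
  obtain ⟨A, hA, hAS⟩ := hS.isPositive.exists_pos_mul_norm_sq_le hSu
  refine ⟨A, max A ‖S‖, hA, le_max_left _ _, fun f => ⟨?_, ?_⟩⟩
  · rw [← hS.re_inner_self_eq]
    exact hAS f
  · rw [← hS.re_inner_self_eq]
    exact (S.re_inner_le_norm_mul_norm_sq f).trans (by gcongr; exact le_max_right _ _)

lemma inner_eq_integral_adjoint [CompleteSpace H] (hS : IsFrameOperator μ F S) {S' : H →L[ℂ] H}
    (hSS' : S ∘L S' = 1) (f g : H) :
    ⟪f, g⟫ = ∫ ς, ⟪f, (ContinuousLinearMap.adjoint S') (F ς)⟫ * ⟪F ς, g⟫ ∂μ := by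
  simp_rw [ContinuousLinearMap.adjoint_inner_right]
  rw [← hS, ← ContinuousLinearMap.comp_apply, hSS', one_apply_eq_self]

end IsFrameOperator

end FrameOperator

theorem controlled_frame_is_continuous_frame_with_reconstruction_general
    {H Ω : Type*} [NormedAddCommGroup H] [InnerProductSpace ℂ H]
    [FiniteDimensional ℂ H] [MeasurableSpace Ω] (μ : Measure Ω)
    (F : Ω → H) (V SF SVF : H →L[ℂ] H) (hVu : IsUnit V)
    (hSFweak : ∀ f g : H, ⟪SF f, g⟫ = ∫ ς, ⟪f, F ς⟫ * ⟪F ς, g⟫ ∂μ)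
    (hcomp : SVF = V ∘L SF)
    (hSVFu : IsUnit SVF) :
    -- F is a continuous frame for H
    (∃ A B : ℝ, 0 < A ∧ A ≤ B ∧ ∀ f : H,
        A * ‖f‖ ^ 2 ≤ ∫ ς, ‖⟪f, F ς⟫‖ ^ 2 ∂μ ∧
        ∫ ς, ‖⟪f, F ς⟫‖ ^ 2 ∂μ ≤ B * ‖f‖ ^ 2) ∧
    -- with invertible frame operator S_F = V⁻¹ S_{VF}
    IsUnit SF ∧ SF = (hVu.unit⁻¹ : (H →L[ℂ] H)ˣ) ∘L SVF ∧
    -- reconstruction formula, weakly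
    (∀ SFinv : H →L[ℂ] H, SF ∘L SFinv = 1 → SFinv ∘L SF = 1 →
      ∀ f g : H, ⟪f, g⟫ =
        ∫ ς, ⟪f, (ContinuousLinearMap.adjoint SFinv) (F ς)⟫ * ⟪F ς, g⟫ ∂μ) := by
  have hSF : SF = (hVu.unit⁻¹ : (H →L[ℂ] H)ˣ) ∘L SVF := by
    rw [hcomp]
    exact (hVu.unit.inv_mul_cancel_left SF).symm
  have hSFu : IsUnit SF := by
    rw [hSF]
    exact hVu.unit⁻¹.isUnit.mul hSVFu
  have hS : IsFrameOperator μ F SF := hSFweak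
  exact ⟨hS.exists_frame_bounds hSFu, hSFu, hSF,
    fun _ hright _ => hS.inner_eq_integral_adjoint hright⟩

theorem controlled_frame_is_continuous_frame_with_reconstruction
    {H Ω : Type*} [NormedAddCommGroup H] [InnerProductSpace ℂ H]
    [FiniteDimensional ℂ H] [MeasurableSpace Ω] (μ : Measure Ω)
    (F : Ω → H) (V SF SVF : H →L[ℂ] H) (hVu : IsUnit V)
    (hSFweak : ∀ f g : H, ⟪SF f, g⟫ = ∫ ς, ⟪f, F ς⟫ * ⟪F ς, g⟫ ∂μ)
    (hSVFweak : ∀ f g : H, ⟪SVF f, g⟫ = ∫ ς, ⟪f, F ς⟫ * ⟪V (F ς), g⟫ ∂μ)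
    (hcomp : SVF = V ∘L SF)
    (hSVFpos : ∀ f : H, 0 ≤ (⟪SVF f, f⟫).re) (hSVFu : IsUnit SVF) :
    -- F is a continuous frame for H
    (∃ A B : ℝ, 0 < A ∧ A ≤ B ∧ ∀ f : H,
        A * ‖f‖ ^ 2 ≤ ∫ ς, ‖⟪f, F ς⟫‖ ^ 2 ∂μ ∧
        ∫ ς, ‖⟪f, F ς⟫‖ ^ 2 ∂μ ≤ B * ‖f‖ ^ 2) ∧
    -- with invertible frame operator S_F = V⁻¹ S_{VF}
    IsUnit SF ∧ SF = (hVu.unit⁻¹ : (H →L[ℂ] H)ˣ) ∘L SVF ∧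
    -- reconstruction formula, weakly
    (∀ SFinv : H →L[ℂ] H, SF ∘L SFinv = 1 → SFinv ∘L SF = 1 →
      ∀ f g : H, ⟪f, g⟫ =
        ∫ ς, ⟪f, (ContinuousLinearMap.adjoint SFinv) (F ς)⟫ * ⟪F ς, g⟫ ∂μ) :=
  controlled_frame_is_continuous_frame_with_reconstruction_general μ F V SF SVF hVu hSFweak hcomp
    hSVFu
end

section
/- Let F : Ω → H be a V-controlled integral frame on a finite-dimensional Hilbert space with controlled frame operator S_{VF}, and let L be a positive invertible operator on H with LV = VL. Then {L F(ς)}_{ς∈Ω} is a V-controlled integral frame with controlled frame operator L S_{VF} L*. -/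
open MeasureTheory

local notation "⟪" x ", " y "⟫" => @inner ℂ _ _ x y

theorem transferred_controlled_frame
    {H Ω : Type*} [NormedAddCommGroup H] [InnerProductSpace ℂ H]
    [FiniteDimensional ℂ H] [MeasurableSpace Ω] (μ : Measure Ω)
    (F : Ω → H) (V SVF L : H →L[ℂ] H)
    (hSVFweak : ∀ f g : H, ⟪SVF f, g⟫ = ∫ ς, ⟪f, F ς⟫ * ⟪V (F ς), g⟫ ∂μ)
    (hSVFpos : ∀ f : H, 0 ≤ (⟪SVF f, f⟫).re) (hSVFu : IsUnit SVF)
    (hLsa : IsSelfAdjoint L) (hLpos : ∀ f : H, 0 ≤ (⟪L f, f⟫).re)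
    (hLu : IsUnit L) (hcomm : L ∘L V = V ∘L L) :
    (∀ f g : H, ⟪(L ∘L SVF ∘L (ContinuousLinearMap.adjoint L)) f, g⟫ =
        ∫ ς, ⟪f, L (F ς)⟫ * ⟪V (L (F ς)), g⟫ ∂μ) ∧
    (∀ f : H, 0 ≤ (⟪(L ∘L SVF ∘L (ContinuousLinearMap.adjoint L)) f, f⟫).re) ∧
    IsUnit (L ∘L SVF ∘L (ContinuousLinearMap.adjoint L)) := by
  have hadj : ContinuousLinearMap.adjoint L = L := hLsa
  have hL : ∀ x y : H, ⟪L x, y⟫ = ⟪x, L y⟫ := by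
    intro x y
    conv_rhs => rw [← hadj]
    rw [ContinuousLinearMap.adjoint_inner_right]
  refine ⟨?_, ?_, ?_⟩
  · intro f g
    simp only [ContinuousLinearMap.comp_apply]
    rw [hL, hadj, hSVFweak]
    congr 1
    funext ς
    have h2 : L (V (F ς)) = V (L (F ς)) := congrFun (congrArg DFunLike.coe hcomm) (F ς)
    rw [hL f, ← hL (V (F ς)), h2]
  · intro f
    simp only [ContinuousLinearMap.comp_apply]
    rw [hL, hadj]
    exact hSVFpos _
  · exact (hLu.mul hSVFu).mul (by rw [hadj]; exact hLu)
end
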